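/- arXiv:1202.1125 — 5 statements merged into one kernel-verified Lean document; each statement's English description precedes it below -/
import Mathlib

section
/- The function h(u) = (u - 1)/√(2(u - 1 - ln u)) for u ≠ 1 (extended by continuity at u = 1) is monotone increasing on (0, ∞). -/
/-!
Write `h = √F` with `F(u) = (u - 1)² / (2(u - 1 - ln u))`. Then
`F' = 2 (u - 1) ℓ(u) / (2(u - 1 - ln u))²` with `ℓ(u) = u - u⁻¹ - 2 ln u`, and since
`ℓ' = (1 - u⁻¹)² ≥ 0` and `ℓ(1) = 0`, the factor `(u - 1) ℓ(u)` is nonnegative: `F` increases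
on `(0, 1)` and on `(1, ∞)`. The same argument applied to `ψ(u) = (u - 1)² - 2(u - 1 - ln u)`,
with `ψ' = 2(u - 1)²/u`, shows `F ≤ 1` on `(0, 1)` and `F ≥ 1` on `(1, ∞)`, which glues the two
branches across the value `h(1) = 1`.
-/

open Real Set

theorem MonotoneOn.of_inter_Iio_of_inter_Ioi {α β : Type*} [LinearOrder α] [Preorder β]
    {f : α → β} {s : Set α} {c : α} (hl : MonotoneOn f (s ∩ Iio c))
    (hr : MonotoneOn f (s ∩ Ioi c)) (hlc : ∀ x ∈ s, x < c → f x ≤ f c)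
    (hcr : ∀ x ∈ s, c < x → f c ≤ f x) : MonotoneOn f s := by
  intro x hx y hy hxy
  rcases lt_trichotomy x c with hxc | rfl | hcx
  · rcases lt_trichotomy y c with hyc | rfl | hcy
    · exact hl ⟨hx, hxc⟩ ⟨hy, hyc⟩ hxy
    · exact hlc x hx hxc
    · exact (hlc x hx hxc).trans (hcr y hy hcy)
  · rcases hxy.eq_or_lt with rfl | hxy
    · exact le_rfl
    · exact hcr y hy hxy
  · exact hr ⟨hx, hcx⟩ ⟨hy, hcx.trans_le hxy⟩ hxy

theorem MonotoneOn.zero_le_sub_mul {α : Type*} [Ring α] [LinearOrder α] [IsStrictOrderedRing α]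
    {s : Set α} {φ : α → α} (hφ : MonotoneOn φ s) {c u : α} (hc : c ∈ s) (hu : u ∈ s)
    (hφc : φ c = 0) : 0 ≤ (u - c) * φ u := by
  rcases le_total u c with huc | hcu
  · exact mul_nonneg_of_nonpos_of_nonpos (sub_nonpos.2 huc) (hφc ▸ hφ hu hc huc)
  · exact mul_nonneg (sub_nonneg.2 hcu) (hφc ▸ hφ hc hu hcu)

theorem monotoneOn_of_hasDerivAt_nonneg {D : Set ℝ} (hD : Convex ℝ D) {f f' : ℝ → ℝ}
    (hf : ∀ x ∈ D, HasDerivAt f (f' x) x) (hf'₀ : ∀ x ∈ D, 0 ≤ f' x) : MonotoneOn f D :=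
  monotoneOn_of_hasDerivWithinAt_nonneg hD (fun x hx => (hf x hx).continuousAt.continuousWithinAt)
    (fun x hx => (hf x (interior_subset hx)).hasDerivWithinAt)
    fun x hx => hf'₀ x (interior_subset hx)

theorem sub_one_mul_sub_inv_sub_two_mul_log_nonneg {u : ℝ} (hu : 0 < u) :
    0 ≤ (u - 1) * (u - u⁻¹ - 2 * log u) := by
  have hmono : MonotoneOn (fun x : ℝ => x - x⁻¹ - 2 * log x) (Ioi 0) := by
    refine monotoneOn_of_hasDerivAt_nonneg (convex_Ioi 0)
      (f' := fun x => (1 - x⁻¹) ^ 2) (fun x (hx : 0 < x) => ?_) fun x _ => sq_nonneg _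
    refine (((hasDerivAt_id' x).sub (hasDerivAt_inv hx.ne')).sub
      ((hasDerivAt_log hx.ne').const_mul 2)).congr_deriv ?_
    field_simp
    ring
  simpa using hmono.zero_le_sub_mul (c := 1) (mem_Ioi.2 one_pos) hu

theorem sub_one_mul_sq_sub_two_mul_sub_log_nonneg {u : ℝ} (hu : 0 < u) :
    0 ≤ (u - 1) * ((u - 1) ^ 2 - 2 * (u - 1 - log u)) := by
  have hmono : MonotoneOn (fun x : ℝ => (x - 1) ^ 2 - 2 * (x - 1 - log x)) (Ioi 0) := by
    refine monotoneOn_of_hasDerivAt_nonneg (convex_Ioi 0)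
      (f' := fun x => 2 * (x - 1) ^ 2 / x) (fun x (hx : 0 < x) => ?_)
      fun x (hx : 0 < x) => by positivity
    refine ((((hasDerivAt_id' x).sub_const 1).fun_pow 2).sub
      ((((hasDerivAt_id' x).sub_const 1).sub (hasDerivAt_log hx.ne')).const_mul 2)).congr_deriv ?_
    field_simp
    ring
  simpa using hmono.zero_le_sub_mul (c := 1) (mem_Ioi.2 one_pos) hu

theorem sub_one_sub_log_pos {u : ℝ} (hu : 0 < u) (hu1 : u ≠ 1) : 0 < u - 1 - log u := by
  linarith [log_lt_sub_one_of_pos hu hu1]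

noncomputable def hSq (u : ℝ) : ℝ := (u - 1) ^ 2 / (2 * (u - 1 - log u))

theorem hasDerivAt_hSq {u : ℝ} (hu : 0 < u) (hu1 : u ≠ 1) :
    HasDerivAt hSq (2 * ((u - 1) * (u - u⁻¹ - 2 * log u)) / (2 * (u - 1 - log u)) ^ 2) u := by
  have hnum : HasDerivAt (fun x : ℝ => (x - 1) ^ 2) (2 * (u - 1)) u := by
    simpa using ((hasDerivAt_id' u).sub_const 1).fun_pow 2
  have hden : HasDerivAt (fun x : ℝ => 2 * (x - 1 - log x)) (2 * (1 - u⁻¹)) u :=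
    (((hasDerivAt_id' u).sub_const 1).sub (hasDerivAt_log hu.ne')).const_mul 2
  refine (hnum.fun_div hden (by linarith [sub_one_sub_log_pos hu hu1])).congr_deriv ?_
  field_simp
  ring

theorem monotoneOn_hSq {D : Set ℝ} (hD : Convex ℝ D) (hD0 : D ⊆ Ioi 0) (hD1 : 1 ∉ D) :
    MonotoneOn hSq D :=
  monotoneOn_of_hasDerivAt_nonneg hD
    (fun _ hx => hasDerivAt_hSq (hD0 hx) (ne_of_mem_of_not_mem hx hD1))
    fun _ hx => div_nonneg (mul_nonneg zero_le_two
      (sub_one_mul_sub_inv_sub_two_mul_log_nonneg (hD0 hx))) (sq_nonneg _)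

theorem hSq_le_one {u : ℝ} (hu : 0 < u) (hu1 : u < 1) : hSq u ≤ 1 := by
  rw [hSq, div_le_one (by linarith [sub_one_sub_log_pos hu hu1.ne]), ← sub_nonpos]
  exact nonpos_of_mul_nonneg_right (sub_one_mul_sq_sub_two_mul_sub_log_nonneg hu) (by linarith)

theorem one_le_hSq {u : ℝ} (hu : 1 < u) : 1 ≤ hSq u := by
  have hu0 : 0 < u := one_pos.trans hu
  rw [hSq, one_le_div (by linarith [sub_one_sub_log_pos hu0 hu.ne']), ← sub_nonneg]
  exact nonneg_of_mul_nonneg_right (sub_one_mul_sq_sub_two_mul_sub_log_nonneg hu0) (by linarith)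

theorem abs_sub_one_div_sqrt_eq_sqrt_hSq (u : ℝ) :
    |u - 1| / √(2 * (u - 1 - log u)) = √(hSq u) := by
  rw [hSq, sqrt_div (sq_nonneg _), sqrt_sq_eq_abs]

/-- The function `h(u) = (u-1)/√(2(u - 1 - ln u))` (for `u ≠ 1`, with the sign convention
making it extendable by continuity at `u = 1`, where its value is `1`) is monotone
increasing on `(0, ∞)`. -/
theorem h_monotone :
    MonotoneOn
      (fun u : ℝ => if u = 1 then 1 else |u - 1| / Real.sqrt (2 * (u - 1 - Real.log u)))
      (Set.Ioi (0 : ℝ)) := by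
  have h_eq : ∀ u : ℝ, u ≠ 1 →
      (if u = 1 then 1 else |u - 1| / √(2 * (u - 1 - log u))) = √(hSq u) := fun u hu => by
    rw [if_neg hu, abs_sub_one_div_sqrt_eq_sqrt_hSq]
  refine MonotoneOn.of_inter_Iio_of_inter_Ioi (c := 1) ?_ ?_ ?_ ?_
  · refine (sqrt_monotone.comp_monotoneOn (monotoneOn_hSq ((convex_Ioi 0).inter (convex_Iio 1))
      inter_subset_left fun h => lt_irrefl (1 : ℝ) h.2)).congr
      fun u hu => (h_eq u hu.2.ne).symm
  · refine (sqrt_monotone.comp_monotoneOn (monotoneOn_hSq ((convex_Ioi 0).inter (convex_Ioi 1))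
      inter_subset_left fun h => lt_irrefl (1 : ℝ) h.2)).congr
      fun u hu => (h_eq u hu.2.ne').symm
  · intro u (hu : 0 < u) hu1
    simp only [h_eq u hu1.ne, if_pos, sqrt_le_one]
    exact hSq_le_one hu hu1
  · intro u _ hu1
    simp only [h_eq u hu1.ne', if_pos, one_le_sqrt]
    exact one_le_hSq hu1
end

section
/- The signed function u ↦ sgn(u-1)·√(2(u - 1 - ln u)) is strictly increasing on (0, ∞), equal to 0 at u = 1. -/
open Real Set

namespace Real

lemma sub_one_sub_log_nonneg {u : ℝ} (hu : 0 < u) : 0 ≤ u - 1 - log u := by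
  linarith [log_le_sub_one_of_pos hu]

/- Both monotonicity lemmas apply `log x < x - 1` to the ratio `x` of the two points; the
resulting bound `x - 1` is at most their difference because both points lie on the same side
of `1`. -/
lemma strictAntiOn_sub_one_sub_log : StrictAntiOn (fun u : ℝ => u - 1 - log u) (Ioc 0 1) := by
  rintro a ⟨ha, -⟩ b ⟨hb, hb1⟩ hab
  have hlog : log a - log b < a / b - 1 := by
    rw [← log_div ha.ne' hb.ne']
    exact log_lt_sub_one_of_pos (div_pos ha hb) (div_ne_one_of_ne hab.ne)
  have hratio : a / b - 1 ≤ a - b := by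
    rw [div_sub_one hb.ne', div_le_iff₀ hb]
    nlinarith
  show b - 1 - log b < a - 1 - log a
  linarith

lemma strictMonoOn_sub_one_sub_log : StrictMonoOn (fun u : ℝ => u - 1 - log u) (Ici 1) := by
  rintro a (ha1 : 1 ≤ a) b - hab
  have ha : 0 < a := one_pos.trans_le ha1
  have hlog : log b - log a < b / a - 1 := by
    rw [← log_div (ha.trans hab).ne' ha.ne']
    exact log_lt_sub_one_of_pos (div_pos (ha.trans hab) ha) (div_ne_one_of_ne hab.ne')
  have hratio : b / a - 1 ≤ b - a := by
    rw [div_sub_one ha.ne', div_le_iff₀ ha]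
    nlinarith
  show a - 1 - log a < b - 1 - log b
  linarith

end Real

/-- The signed function `u ↦ sgn(u-1)·√(2(u - 1 - ln u))` is strictly increasing on
`(0, ∞)` and equals `0` at `u = 1`. -/
theorem G_strictMono (G : ℝ → ℝ)
    (hG : G = fun u : ℝ =>
      if u < 1 then -Real.sqrt (2 * (u - 1 - Real.log u))
      else Real.sqrt (2 * (u - 1 - Real.log u))) :
    StrictMonoOn G (Set.Ioi (0 : ℝ)) ∧ G 1 = 0 := by
  subst hG
  refine ⟨?_, by simp⟩
  have left : StrictMonoOn (fun u => -√(2 * (u - 1 - log u))) (Ioc 0 1) := fun a ha b hb hab =>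
    neg_lt_neg <| sqrt_lt_sqrt (by linarith [sub_one_sub_log_nonneg hb.1])
      (by linarith [strictAntiOn_sub_one_sub_log ha hb hab])
  have right : StrictMonoOn (fun u => √(2 * (u - 1 - log u))) (Ici 1) := fun a ha b hb hab =>
    sqrt_lt_sqrt (by linarith [sub_one_sub_log_nonneg (one_pos.trans_le ha)])
      (by linarith [strictMonoOn_sub_one_sub_log ha hb hab])
  -- `G 1` comes from the `else` branch, but both branches vanish at `1`, so `left` covers `(0, 1]`.
  rw [← Ioc_union_Ici_eq_Ioi zero_lt_one]
  refine (left.congr ?_).union (right.congr ?_) ⟨⟨one_pos, le_rfl⟩, fun _ hu => hu.2⟩ isLeast_Ici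
  · rintro u ⟨-, hu⟩
    rcases hu.lt_or_eq with hu | rfl <;> simp [*]
  · intro u hu
    simp [not_lt.2 (mem_Ici.1 hu)]
end

section
/- For a Poisson random variable M with mean t > 0 and every nonnegative integer m, P(M < m) ≤ Φ(G(m)), where G(m) = sgn(m - t)·(2(t - m - m ln(t/m)))^{1/2} (with G(0) = -(2t)^{1/2}) and Φ is the standard Gaussian CDF. -/
/-!
View both sides as functions of the Poisson mean `s`: with `D(s) = s - m - m log (s / m)` and
`G(s) = ±√(2 D(s))` carrying the sign of `m - s`, let `f(s) = Φ(G(s)) - P(M < m)`. Then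
`f(s) → 0` both as `s → 0⁺` (where `G → +∞` and `P(M < m) → 1`) and as `s → ∞`.
Since `d/ds P(M < m) = -P(M = m - 1)` and `φ(G(s)) = κ P(M = m)` with
`κ = m! eᵐ / (mᵐ √(2π))`, away from `s = m` the derivative `f'(s)` has the sign of
`m |G(s)| - κ |s - m|`, i.e. of `h(s) = 2m² D(s) - κ² (s - m)²`. Stirling's bound gives
`κ² ≥ m`, and `h' = 2 (s - m) (m² / s - κ²)` with `h(m) = 0` shows that `h ≤ 0` on
`[m² / κ², ∞)` while `h` decreases on `(0, m² / κ²]`. So `f` decreases on `[m, ∞)`, and on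
`(0, m]` it first increases and then decreases; being nonnegative at both ends, `f ≥ 0`.
-/

open Real MeasureTheory ProbabilityTheory Set Filter Topology

namespace PoissonGaussian

local notation "Φ" => cdf (gaussianReal 0 1)

local notation "φ" => gaussianPDFReal 0 1

lemma gaussianPDFReal_zero_one (z : ℝ) : φ z = exp (-z ^ 2 / 2) / √(2 * π) := by
  simp [gaussianPDFReal, div_eq_inv_mul]

lemma continuous_gaussianPDFReal (μ : ℝ) (v : NNReal) : Continuous (gaussianPDFReal μ v) := by
  unfold gaussianPDFReal; fun_prop

lemma cdf_gaussianReal_eq_integral (x : ℝ) : Φ x = ∫ z in Iic x, φ z := by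
  rw [cdf_eq_real, measureReal_def, gaussianReal_apply_eq_integral _ one_ne_zero]
  exact ENNReal.toReal_ofReal
    (setIntegral_nonneg measurableSet_Iic fun z _ ↦ gaussianPDFReal_nonneg _ _ z)

lemma hasDerivAt_integral_Iic {f : ℝ → ℝ} (hf : Integrable f) (hc : Continuous f) (x : ℝ) :
    HasDerivAt (fun y ↦ ∫ z in Iic y, f z) (f x) x := by
  have hsplit (y : ℝ) :
      ∫ z in Iic y, f z = (∫ z in Iic 0, f z) + ∫ z in (0:ℝ)..y, f z := by
    rw [← intervalIntegral.integral_Iic_sub_Iic hf.integrableOn hf.integrableOn]; ring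
  rw [funext hsplit]
  exact (intervalIntegral.integral_hasDerivAt_right hf.intervalIntegrable
    (hc.stronglyMeasurableAtFilter _ _) hc.continuousAt).const_add _

lemma hasDerivAt_cdf_gaussianReal (x : ℝ) : HasDerivAt Φ (φ x) x := by
  rw [funext cdf_gaussianReal_eq_integral]
  exact hasDerivAt_integral_Iic (integrable_gaussianPDFReal 0 1) (continuous_gaussianPDFReal 0 1) x

lemma continuous_cdf_gaussianReal : Continuous Φ :=
  continuous_iff_continuousAt.2 fun x ↦ (hasDerivAt_cdf_gaussianReal x).continuousAt

noncomputable def poissonTerm (k : ℕ) (s : ℝ) : ℝ := exp (-s) * s ^ k / k.factorial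

noncomputable def poissonLowerTail (m : ℕ) (s : ℝ) : ℝ :=
  ∑ k ∈ Finset.range m, poissonTerm k s

lemma poissonTerm_succ_mul (k : ℕ) (s : ℝ) :
    poissonTerm (k + 1) s * (k + 1) = poissonTerm k s * s := by
  simp only [poissonTerm, Nat.factorial_succ, Nat.cast_mul, Nat.cast_succ]
  field_simp
  ring

lemma hasDerivAt_poissonTerm_zero (s : ℝ) : HasDerivAt (poissonTerm 0) (-poissonTerm 0 s) s := by
  unfold poissonTerm
  simpa using (hasDerivAt_neg s).exp

lemma hasDerivAt_poissonTerm_succ (k : ℕ) (s : ℝ) :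
    HasDerivAt (poissonTerm (k + 1)) (poissonTerm k s - poissonTerm (k + 1) s) s := by
  have h := (((hasDerivAt_neg s).exp).mul (hasDerivAt_pow (k + 1) s)).div_const
    ((k + 1).factorial : ℝ)
  unfold poissonTerm
  refine h.congr_deriv ?_
  simp only [Nat.factorial_succ, Nat.cast_mul, Nat.cast_succ, Nat.add_sub_cancel]
  field_simp
  ring

lemma hasDerivAt_poissonLowerTail_succ (n : ℕ) (s : ℝ) :
    HasDerivAt (poissonLowerTail (n + 1)) (-poissonTerm n s) s := by
  induction n with
  | zero =>
    have h1 : poissonLowerTail 1 = poissonTerm 0 := funext fun s ↦ Finset.sum_range_one _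
    simpa [h1] using hasDerivAt_poissonTerm_zero s
  | succ n ih =>
    have hsplit : poissonLowerTail (n + 2) =
        fun s ↦ poissonLowerTail (n + 1) s + poissonTerm (n + 1) s :=
      funext fun s ↦ Finset.sum_range_succ _ _
    rw [hsplit]
    exact (ih.add (hasDerivAt_poissonTerm_succ n s)).congr_deriv (by ring)

lemma continuous_poissonLowerTail (m : ℕ) : Continuous (poissonLowerTail m) := by
  unfold poissonLowerTail poissonTerm; fun_prop

lemma poissonLowerTail_zero_right {m : ℕ} (hm : m ≠ 0) : poissonLowerTail m 0 = 1 := by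
  rw [poissonLowerTail, Finset.sum_eq_single_of_mem 0 (Finset.mem_range.2 (Nat.pos_of_ne_zero hm))]
  · simp [poissonTerm]
  · intro k _ hk
    simp [poissonTerm, zero_pow hk]

lemma tendsto_poissonLowerTail_atTop (m : ℕ) : Tendsto (poissonLowerTail m) atTop (𝓝 0) := by
  have hterm (k : ℕ) : Tendsto (poissonTerm k) atTop (𝓝 0) := by
    unfold poissonTerm
    simpa [mul_comm] using
      (tendsto_pow_mul_exp_neg_atTop_nhds_zero k).div_const (k.factorial : ℝ)
  unfold poissonLowerTail
  simpa using tendsto_finsetSum (Finset.range m) fun k _ ↦ hterm k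

noncomputable def poissonKL (m s : ℝ) : ℝ := s - m - m * log (s / m)

section KL

variable {m s : ℝ}

lemma poissonKL_self (hm : m ≠ 0) : poissonKL m m = 0 := by
  simp [poissonKL, div_self hm]

lemma sub_le_mul_log_div (hm : 0 < m) (hs : 0 < s) : m * log (s / m) ≤ s - m := by
  have h := mul_le_mul_of_nonneg_left (log_le_sub_one_of_pos (div_pos hs hm)) hm.le
  rwa [mul_sub, mul_div_cancel₀ _ hm.ne', mul_one] at h

lemma poissonKL_nonneg (hm : 0 < m) (hs : 0 < s) : 0 ≤ poissonKL m s := by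
  have := sub_le_mul_log_div hm hs
  unfold poissonKL; linarith

lemma poissonKL_pos (hm : 0 < m) (hs : 0 < s) (hsm : s ≠ m) : 0 < poissonKL m s := by
  have hne : s / m ≠ 1 := fun h ↦ hsm (by rwa [div_eq_one_iff_eq hm.ne'] at h)
  have h := mul_lt_mul_of_pos_left (log_lt_sub_one_of_pos (div_pos hs hm) hne) hm
  rw [mul_sub, mul_div_cancel₀ _ hm.ne', mul_one] at h
  unfold poissonKL; linarith

lemma hasDerivAt_poissonKL (hm : m ≠ 0) (hs : s ≠ 0) :
    HasDerivAt (poissonKL m) (1 - m / s) s := by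
  have hlog := ((hasDerivAt_id s).div_const m).log (div_ne_zero hs hm)
  refine (((hasDerivAt_id s).sub_const m).sub (hlog.const_mul m)).congr_deriv ?_
  simp only [id]
  field_simp

lemma continuousOn_poissonKL (hm : m ≠ 0) : ContinuousOn (poissonKL m) (Ioi 0) :=
  fun _ hs ↦ (hasDerivAt_poissonKL hm (ne_of_gt hs)).continuousAt.continuousWithinAt

lemma half_sub_le_poissonKL (hm : 0 < m) (hs : 0 < s) : s / 2 - m * log 2 ≤ poissonKL m s := by
  have h := sub_le_mul_log_div (m := 2 * m) (by positivity) hs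
  rw [div_mul_eq_div_div_swap, log_div (by positivity) two_ne_zero] at h
  unfold poissonKL; linarith

lemma tendsto_poissonKL_atTop (hm : 0 < m) : Tendsto (poissonKL m) atTop atTop := by
  refine tendsto_atTop_mono' _ ?_
    (tendsto_atTop_add_const_right _ (-(m * log 2)) (tendsto_id.atTop_div_const two_pos))
  filter_upwards [eventually_gt_atTop 0] with s hs
  simpa using half_sub_le_poissonKL hm hs

lemma tendsto_poissonKL_nhdsGT_zero (hm : 0 < m) : Tendsto (poissonKL m) (𝓝[>] 0) atTop := by
  have hsplit : ∀ s ∈ Ioi (0 : ℝ), (s - m + m * log m) + m * -log s = poissonKL m s :=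
    fun s hs ↦ by rw [poissonKL, log_div (ne_of_gt hs) hm.ne']; ring
  refine Tendsto.congr' (eventually_nhdsWithin_of_forall hsplit)
    (Tendsto.add_atTop (C := 0 - m + m * log m) ?_ ?_)
  · exact ((continuous_id.sub continuous_const).add continuous_const).continuousWithinAt.tendsto
  · exact (tendsto_neg_atBot_atTop.comp tendsto_log_nhdsGT_zero).const_mul_atTop hm

end KL

noncomputable def signedRoot (m s : ℝ) : ℝ :=
  if m < s then -√(2 * poissonKL m s) else √(2 * poissonKL m s)

section SignedRoot

variable {m s : ℝ}

lemma signedRoot_sq (hm : 0 < m) (hs : 0 < s) : signedRoot m s ^ 2 = 2 * poissonKL m s := by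
  have h := Real.sq_sqrt (mul_nonneg zero_le_two (poissonKL_nonneg hm hs))
  unfold signedRoot; split_ifs <;> simp only [neg_sq, h]

lemma continuousOn_signedRoot (hm : 0 < m) : ContinuousOn (signedRoot m) (Ioi 0) := by
  have hroot : ContinuousOn (fun s ↦ √(2 * poissonKL m s)) (Ioi 0) :=
    (continuousOn_const.mul (continuousOn_poissonKL hm.ne')).sqrt
  refine ContinuousOn.if (fun s hs ↦ ?_) (hroot.neg.mono inter_subset_left)
    (hroot.mono inter_subset_left)
  rw [show {s | m < s} = Ioi m from rfl, frontier_Ioi] at hs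
  simp [mem_singleton_iff.1 hs.2, poissonKL_self hm.ne']

lemma hasDerivAt_signedRoot (hm : 0 < m) (hs : 0 < s) (hsm : s ≠ m) :
    HasDerivAt (signedRoot m) (-|s - m| / (s * √(2 * poissonKL m s))) s := by
  have hroot := ((hasDerivAt_poissonKL hm.ne' hs.ne').const_mul 2).sqrt
    (by positivity [poissonKL_pos hm hs hsm])
  rcases hsm.lt_or_gt with hlt | hgt
  · have heq : (fun s ↦ √(2 * poissonKL m s)) =ᶠ[𝓝 s] signedRoot m :=
      (eventually_lt_nhds hlt).mono fun u hu ↦ by simp [signedRoot, not_lt.2 hu.le]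
    refine (hroot.congr_of_eventuallyEq heq.symm).congr_deriv ?_
    rw [abs_of_neg (sub_neg.2 hlt)]
    field_simp
  · have heq : (fun s ↦ -√(2 * poissonKL m s)) =ᶠ[𝓝 s] signedRoot m :=
      (eventually_gt_nhds hgt).mono fun u hu ↦ by simp [signedRoot, hu]
    refine (hroot.neg.congr_of_eventuallyEq heq.symm).congr_deriv ?_
    rw [abs_of_pos (sub_pos.2 hgt)]
    field_simp

lemma tendsto_signedRoot_atTop (hm : 0 < m) : Tendsto (signedRoot m) atTop atBot := by
  have hroot := tendsto_sqrt_atTop.comp ((tendsto_poissonKL_atTop hm).const_mul_atTop two_pos)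
  refine (tendsto_neg_atTop_atBot.comp hroot).congr' ?_
  filter_upwards [eventually_gt_atTop m] with s hs
  simp [signedRoot, hs]

lemma tendsto_signedRoot_nhdsGT_zero (hm : 0 < m) : Tendsto (signedRoot m) (𝓝[>] 0) atTop := by
  have hroot := tendsto_sqrt_atTop.comp ((tendsto_poissonKL_nhdsGT_zero hm).const_mul_atTop two_pos)
  refine hroot.congr' ?_
  filter_upwards [Ioo_mem_nhdsGT hm] with s hs
  simp [signedRoot, not_lt.2 hs.2.le]

end SignedRoot

noncomputable def stirlingRatio (m : ℕ) : ℝ := m.factorial * exp m / (m ^ m * √(2 * π))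

lemma sqrt_le_stirlingRatio (m : ℕ) : √m ≤ stirlingRatio m := by
  have h := Stirling.le_factorial_stirling m
  rw [sqrt_mul (by positivity), div_pow, mul_comm] at h
  rcases Nat.eq_zero_or_pos m with rfl | hm
  · simp [stirlingRatio]
  rw [stirlingRatio, le_div_iff₀ (by positivity)]
  have : (m : ℝ) ^ m / exp 1 ^ m * exp m = m ^ m := by
    rw [← exp_nat_mul, mul_one]; field_simp
  calc √m * (m ^ m * √(2 * π)) = m ^ m / exp 1 ^ m * (√(2 * π) * √m) * exp m := by
        rw [mul_right_comm, this]; ring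
    _ ≤ m.factorial * exp m := by gcongr

lemma stirlingRatio_nonneg (m : ℕ) : 0 ≤ stirlingRatio m :=
  (sqrt_nonneg _).trans (sqrt_le_stirlingRatio m)

lemma natCast_le_stirlingRatio_sq (m : ℕ) : (m : ℝ) ≤ stirlingRatio m ^ 2 :=
  (sqrt_le_iff.1 (sqrt_le_stirlingRatio m)).2

lemma gaussianPDFReal_signedRoot {m : ℕ} (hm : m ≠ 0) {s : ℝ} (hs : 0 < s) :
    gaussianPDFReal 0 1 (signedRoot m s) = stirlingRatio m * poissonTerm m s := by
  have hm' : (0 : ℝ) < m := by positivity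
  have hexp : exp (-poissonKL m s) = exp (-s) * exp m * (s / m) ^ m := by
    rw [← exp_log (pow_pos (div_pos hs hm') m), log_pow, ← exp_add, ← exp_add, poissonKL]
    ring_nf
  rw [gaussianPDFReal_zero_one, neg_div, signedRoot_sq hm' hs,
    mul_div_cancel_left₀ _ two_ne_zero, hexp,
    stirlingRatio, poissonTerm, div_pow]
  field_simp

/-- Away from `s = m`, the derivative of `tailGap m` at `s` has the sign of
`klGap m (stirlingRatio m ^ 2) s` (`hasDerivAt_tailGap`, `klGap_eq_sq_sub_sq`). -/
noncomputable def klGap (m K s : ℝ) : ℝ := 2 * m ^ 2 * poissonKL m s - K * (s - m) ^ 2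

section KLGap

variable {m K s t : ℝ}

lemma klGap_self (hm : m ≠ 0) : klGap m K m = 0 := by
  simp [klGap, poissonKL_self hm]

lemma hasDerivAt_klGap (hm : m ≠ 0) (hs : s ≠ 0) :
    HasDerivAt (klGap m K) (2 * (s - m) * (m ^ 2 / s - K)) s := by
  have hsq := ((hasDerivAt_id s).sub_const m).pow 2 |>.const_mul K
  refine (((hasDerivAt_poissonKL hm hs).const_mul (2 * m ^ 2)).sub hsq).congr_deriv ?_
  simp only [id]
  field_simp
  ring

lemma continuousOn_klGap (hm : m ≠ 0) : ContinuousOn (klGap m K) (Ioi 0) :=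
  fun _ hs ↦ (hasDerivAt_klGap hm (ne_of_gt hs)).continuousAt.continuousWithinAt

lemma antitoneOn_klGap_Ici (hm : 0 < m) (hK : m ≤ K) : AntitoneOn (klGap m K) (Ici m) := by
  refine antitoneOn_of_hasDerivWithinAt_nonpos (convex_Ici m)
    ((continuousOn_klGap hm.ne').mono fun s hs ↦ hm.trans_le hs)
    (fun s hs ↦ (hasDerivAt_klGap hm.ne' (hm.trans_le (interior_subset hs)).ne').hasDerivWithinAt)
    fun s hs ↦ ?_
  rw [interior_Ici, mem_Ioi] at hs
  have : m ^ 2 / s ≤ K := by rw [div_le_iff₀ (hm.trans hs)]; nlinarith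
  exact mul_nonpos_of_nonneg_of_nonpos (by linarith) (by linarith)

lemma monotoneOn_klGap_Icc (hm : 0 < m) (hK : 0 < K) :
    MonotoneOn (klGap m K) (Icc (m ^ 2 / K) m) := by
  have h0 : 0 < m ^ 2 / K := by positivity
  refine monotoneOn_of_hasDerivWithinAt_nonneg (convex_Icc _ m)
    ((continuousOn_klGap hm.ne').mono fun s hs ↦ h0.trans_le hs.1)
    (fun s hs ↦
      (hasDerivAt_klGap hm.ne' (h0.trans_le (interior_subset hs).1).ne').hasDerivWithinAt)
    fun s hs ↦ ?_
  rw [interior_Icc, mem_Ioo] at hs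
  have : m ^ 2 / s ≤ K := by
    rw [div_le_iff₀ (h0.trans hs.1)]; rw [div_lt_iff₀ hK] at hs; linarith
  exact mul_nonneg_of_nonpos_of_nonpos (by linarith) (by linarith)

lemma antitoneOn_klGap_Ioc (hm : 0 < m) (hK : m ≤ K) :
    AntitoneOn (klGap m K) (Ioc 0 (m ^ 2 / K)) := by
  have hK0 : 0 < K := hm.trans_le hK
  refine antitoneOn_of_hasDerivWithinAt_nonpos (convex_Ioc 0 _)
    ((continuousOn_klGap hm.ne').mono fun s hs ↦ hs.1)
    (fun s hs ↦ (hasDerivAt_klGap hm.ne' (interior_subset hs).1.ne').hasDerivWithinAt)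
    fun s hs ↦ ?_
  rw [interior_Ioc, mem_Ioo] at hs
  have hsm : s < m := hs.2.trans_le <| by
    rw [div_le_iff₀ hK0]; nlinarith
  have : K ≤ m ^ 2 / s := by
    rw [le_div_iff₀ hs.1]; rw [lt_div_iff₀ hK0] at hs; linarith
  exact mul_nonpos_of_nonpos_of_nonneg (by linarith) (by linarith)

lemma klGap_nonpos (hm : 0 < m) (hK : m ≤ K) (hs : m ^ 2 / K ≤ s) : klGap m K s ≤ 0 := by
  rcases le_total s m with hsm | hms
  · simpa [klGap_self hm.ne'] using
      monotoneOn_klGap_Icc hm (hm.trans_le hK) ⟨hs, hsm⟩ ⟨hs.trans hsm, le_rfl⟩ hsm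
  · simpa [klGap_self hm.ne'] using antitoneOn_klGap_Ici hm hK self_mem_Ici hms hms

lemma klGap_nonpos_of_le (hm : 0 < m) (hK : m ≤ K) (ht : 0 < t) (hkt : klGap m K t ≤ 0)
    (hts : t ≤ s) : klGap m K s ≤ 0 := by
  rcases le_total (m ^ 2 / K) s with hs | hs
  · exact klGap_nonpos hm hK hs
  · exact (antitoneOn_klGap_Ioc hm hK ⟨ht, hts.trans hs⟩ ⟨ht.trans_le hts, hs⟩ hts).trans
      hkt

lemma klGap_pos_of_le (hm : 0 < m) (hK : m ≤ K) (hs : 0 < s) (hst : s ≤ t)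
    (hkt : 0 < klGap m K t) : 0 < klGap m K s := by
  have ht : t < m ^ 2 / K := lt_of_not_ge fun h ↦ (klGap_nonpos hm hK h).not_gt hkt
  exact hkt.trans_le
    (antitoneOn_klGap_Ioc hm hK ⟨hs, hst.trans ht.le⟩ ⟨hs.trans_le hst, ht.le⟩ hst)

lemma klGap_eq_sq_sub_sq (hm : 0 < m) (hs : 0 < s) (κ : ℝ) :
    klGap m (κ ^ 2) s = (m * √(2 * poissonKL m s)) ^ 2 - (κ * |s - m|) ^ 2 := by
  rw [mul_pow, mul_pow, sq_sqrt (by linarith [poissonKL_nonneg hm hs]), sq_abs, klGap]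
  ring

end KLGap

noncomputable def tailGap (m : ℕ) (s : ℝ) : ℝ := Φ (signedRoot m s) - poissonLowerTail m s

section TailGap

variable {m : ℕ}

lemma continuousOn_tailGap (hm : m ≠ 0) : ContinuousOn (tailGap m) (Ioi 0) :=
  (continuous_cdf_gaussianReal.comp_continuousOn (continuousOn_signedRoot (by positivity))).sub
    (continuous_poissonLowerTail m).continuousOn

lemma hasDerivAt_tailGap (hm : m ≠ 0) {s : ℝ} (hs : 0 < s) (hsm : s ≠ m) :
    HasDerivAt (tailGap m)
      (poissonTerm (m - 1) s / (m * √(2 * poissonKL m s)) *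
        (m * √(2 * poissonKL m s) - stirlingRatio m * |s - m|)) s := by
  have hm' : (0 : ℝ) < m := by positivity
  have hQ : 0 < √(2 * poissonKL m s) := by positivity [poissonKL_pos hm' hs hsm]
  have hcdf := (hasDerivAt_cdf_gaussianReal _).comp s (hasDerivAt_signedRoot hm' hs hsm)
  obtain ⟨n, rfl⟩ : ∃ n, m = n + 1 := ⟨m - 1, by omega⟩
  refine (hcdf.sub (hasDerivAt_poissonLowerTail_succ n s)).congr_deriv ?_
  have hterm := poissonTerm_succ_mul n s
  rw [gaussianPDFReal_signedRoot hm hs, Nat.add_sub_cancel]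
  push_cast at hm' hQ ⊢
  field_simp
  linear_combination (-stirlingRatio (n + 1) * |s - (n + 1)|) * hterm

lemma antitoneOn_tailGap (hm : m ≠ 0) {D : Set ℝ} (hD : Convex ℝ D) (hD0 : D ⊆ Ioi 0)
    (hmD : (m : ℝ) ∉ interior D)
    (hgap : ∀ s ∈ interior D, klGap m (stirlingRatio m ^ 2) s ≤ 0) :
    AntitoneOn (tailGap m) D := by
  have hm' : (0 : ℝ) < m := by positivity
  refine antitoneOn_of_hasDerivWithinAt_nonpos hD ((continuousOn_tailGap hm).mono hD0)
    (fun s hs ↦ (hasDerivAt_tailGap hm (hD0 (interior_subset hs))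
      (ne_of_mem_of_not_mem hs hmD)).hasDerivWithinAt) fun s hs ↦ ?_
  have hs0 : 0 < s := hD0 (interior_subset hs)
  have hsq := klGap_eq_sq_sub_sq hm' hs0 (stirlingRatio m) ▸ hgap s hs
  have hκ := stirlingRatio_nonneg m
  have hle := (sq_le_sq₀ (by positivity) (by positivity)).1 (sub_nonpos.1 hsq)
  exact mul_nonpos_of_nonneg_of_nonpos (by unfold poissonTerm; positivity) (sub_nonpos.2 hle)

lemma monotoneOn_tailGap (hm : m ≠ 0) {D : Set ℝ} (hD : Convex ℝ D) (hD0 : D ⊆ Ioi 0)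
    (hmD : (m : ℝ) ∉ interior D)
    (hgap : ∀ s ∈ interior D, 0 ≤ klGap m (stirlingRatio m ^ 2) s) :
    MonotoneOn (tailGap m) D := by
  have hm' : (0 : ℝ) < m := by positivity
  refine monotoneOn_of_hasDerivWithinAt_nonneg hD ((continuousOn_tailGap hm).mono hD0)
    (fun s hs ↦ (hasDerivAt_tailGap hm (hD0 (interior_subset hs))
      (ne_of_mem_of_not_mem hs hmD)).hasDerivWithinAt) fun s hs ↦ ?_
  have hs0 : 0 < s := hD0 (interior_subset hs)
  have hsq := klGap_eq_sq_sub_sq hm' hs0 (stirlingRatio m) ▸ hgap s hs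
  have hκ := stirlingRatio_nonneg m
  have hle := (sq_le_sq₀ (by positivity) (by positivity)).1 (sub_nonneg.1 hsq)
  exact mul_nonneg (by unfold poissonTerm; positivity) (sub_nonneg.2 hle)

lemma tendsto_tailGap_atTop (hm : m ≠ 0) : Tendsto (tailGap m) atTop (𝓝 0) := by
  have hcdf := (tendsto_cdf_atBot (μ := gaussianReal 0 1)).comp
    (tendsto_signedRoot_atTop (m := m) (by positivity))
  unfold tailGap
  simpa using hcdf.sub (tendsto_poissonLowerTail_atTop m)

lemma tendsto_tailGap_nhdsGT_zero (hm : m ≠ 0) : Tendsto (tailGap m) (𝓝[>] 0) (𝓝 0) := by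
  have htail : Tendsto (poissonLowerTail m) (𝓝[>] 0) (𝓝 1) := by
    rw [← poissonLowerTail_zero_right hm]
    exact (continuous_poissonLowerTail m).continuousWithinAt
  have hcdf := (tendsto_cdf_atTop (μ := gaussianReal 0 1)).comp
    (tendsto_signedRoot_nhdsGT_zero (m := m) (by positivity))
  unfold tailGap
  simpa using hcdf.sub htail

lemma tailGap_nonneg_of_le (hm : m ≠ 0) {t : ℝ} (hmt : (m : ℝ) ≤ t) :
    0 ≤ tailGap m t := by
  have hm' : (0 : ℝ) < m := by positivity
  have hκ := natCast_le_stirlingRatio_sq m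
  have hanti : AntitoneOn (tailGap m) (Ici t) := by
    refine antitoneOn_tailGap hm (convex_Ici t) (fun s hs ↦ hm'.trans_le (hmt.trans hs))
      (by simp [hmt]) fun s hs ↦ klGap_nonpos hm' hκ ?_
    rw [interior_Ici] at hs
    rw [div_le_iff₀ (hm'.trans_le hκ)]
    nlinarith [mem_Ioi.1 hs]
  refine le_of_tendsto (tendsto_tailGap_atTop hm) ?_
  filter_upwards [eventually_ge_atTop t] with s hs
  exact hanti self_mem_Ici hs hs

lemma tailGap_nonneg (hm : m ≠ 0) {t : ℝ} (ht : 0 < t) : 0 ≤ tailGap m t := by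
  have hm' : (0 : ℝ) < m := by positivity
  have hκ := natCast_le_stirlingRatio_sq m
  rcases le_or_gt (m : ℝ) t with hmt | htm
  · exact tailGap_nonneg_of_le hm hmt
  rcases le_or_gt (klGap m (stirlingRatio m ^ 2) t) 0 with hgap | hgap
  · have hanti : AntitoneOn (tailGap m) (Icc t m) :=
      antitoneOn_tailGap hm (convex_Icc t m) (fun s hs ↦ ht.trans_le hs.1) (by simp)
        fun s hs ↦ klGap_nonpos_of_le hm' hκ ht hgap (interior_subset hs).1
    exact (tailGap_nonneg_of_le hm le_rfl).trans
      (hanti ⟨le_rfl, htm.le⟩ ⟨htm.le, le_rfl⟩ htm.le)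
  · refine le_of_tendsto (tendsto_tailGap_nhdsGT_zero hm) ?_
    filter_upwards [Ioo_mem_nhdsGT ht] with a ha
    have hmono : MonotoneOn (tailGap m) (Icc a t) :=
      monotoneOn_tailGap hm (convex_Icc a t) (fun s hs ↦ ha.1.trans_le hs.1)
        (by simp [htm.le]) fun s hs ↦ (klGap_pos_of_le hm' hκ
          (ha.1.trans_le (interior_subset hs).1) (interior_subset hs).2 hgap).le
    exact hmono ⟨le_rfl, ha.2.le⟩ ⟨ha.2.le, le_rfl⟩ ha.2.le

end TailGap

end PoissonGaussian

/-- For `M ~ Po(t)` with `t > 0` and every nonnegative integer `m`,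
`P(M < m) ≤ Φ(G(m))` where `G(m) = sgn(m-t)·(2(t - m - m ln(t/m)))^{1/2}`
(with `G(0) = -(2t)^{1/2}`) and `Φ` is the standard Gaussian CDF. -/
theorem poisson_lower_intersection (t : ℝ) (ht : 0 < t) (m : ℕ) (G : ℝ)
    (hG : G = if (m : ℝ) < t then -Real.sqrt (2 * (t - m - m * Real.log (t / m)))
      else Real.sqrt (2 * (t - m - m * Real.log (t / m)))) :
    (∑' k : ℕ, if k < m then Real.exp (-t) * t ^ k / Nat.factorial k else 0)
      ≤ ∫ z in Set.Iic G, Real.exp (-z ^ 2 / 2) / Real.sqrt (2 * Real.pi) := by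
  have hsum : (∑' k : ℕ, if k < m then exp (-t) * t ^ k / k.factorial else 0) =
      PoissonGaussian.poissonLowerTail m t := by
    rw [tsum_eq_sum (s := Finset.range m) fun k hk ↦ if_neg (by simpa using hk)]
    exact Finset.sum_congr rfl fun k hk ↦ if_pos (Finset.mem_range.1 hk)
  have hcdf : ∫ z in Iic G, exp (-z ^ 2 / 2) / √(2 * π) =
      cdf (gaussianReal 0 1) (PoissonGaussian.signedRoot m t) := by
    simp_rw [PoissonGaussian.cdf_gaussianReal_eq_integral,
      PoissonGaussian.gaussianPDFReal_zero_one, hG]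
    rfl
  rw [hsum, hcdf, ← sub_nonneg]
  rcases eq_or_ne m 0 with rfl | hm
  · simpa [PoissonGaussian.poissonLowerTail] using cdf_nonneg _ _
  · exact PoissonGaussian.tailGap_nonneg hm ht
end

section
/- For a binomial random variable with parameters n and q and any k with 0 ≤ k ≤ n, the Chernoff bound P(X ≥ k) ≤ exp(-n·D(k/n ‖ q)) holds for k ≥ nq, where D(p‖q) = p ln(p/q) + (1-p) ln((1-p)/(1-q)). -/
/-- Chernoff bound for the binomial distribution: for `X ~ Bin(n, q)` and `nq ≤ k ≤ n`,
`P(X ≥ k) ≤ exp(-n·D(k/n ‖ q))` with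
`D(p‖q) = p ln(p/q) + (1-p) ln((1-p)/(1-q))`. -/
theorem binomial_chernoff (n : ℕ) (hn : 0 < n) (q : ℝ) (hq : 0 < q) (hq1 : q < 1)
    (k : ℕ) (hk : k ≤ n) (hnq : (n : ℝ) * q ≤ k) :
    (∑ j ∈ Finset.range (n + 1),
        if k ≤ j then (n.choose j : ℝ) * q ^ j * (1 - q) ^ (n - j) else 0)
      ≤ Real.exp (-((n : ℝ) *
          ((k / n : ℝ) * Real.log ((k / n) / q)
            + (1 - (k : ℝ) / n) * Real.log ((1 - (k : ℝ) / n) / (1 - q))))) := by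
  have hn0 : (0 : ℝ) < n := by exact_mod_cast hn
  set p : ℝ := (k : ℝ) / n with hp
  have hkpos : (0 : ℝ) < k := lt_of_lt_of_le (by positivity) hnq
  have hp0 : 0 < p := by positivity
  have hqp : q ≤ p := by rw [hp, le_div_iff₀ hn0]; linarith
  have hp1 : p ≤ 1 := by rw [hp, div_le_one hn0]; exact_mod_cast hk
  by_cases hkn : k = n
  · -- p = 1 case: equality
    have hpe : p = 1 := by rw [hp, hkn, div_self hn0.ne']
    have hL : (∑ j ∈ Finset.range (n + 1),
        if k ≤ j then (n.choose j : ℝ) * q ^ j * (1 - q) ^ (n - j) else 0) = q ^ n := by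
      have hc : ∀ j ∈ Finset.range (n + 1),
          (if k ≤ j then (n.choose j : ℝ) * q ^ j * (1 - q) ^ (n - j) else 0)
            = (if j = n then (n.choose j : ℝ) * q ^ j * (1 - q) ^ (n - j) else 0) := by
        intro j hj
        have hj' : j ≤ n := Nat.lt_succ_iff.mp (Finset.mem_range.mp hj)
        exact if_congr (by constructor <;> omega) rfl rfl
      rw [Finset.sum_congr rfl hc, Finset.sum_ite_eq' (Finset.range (n + 1)) n]
      simp
    have hR : Real.exp (-((n : ℝ) *
          (p * Real.log (p / q) + (1 - p) * Real.log ((1 - p) / (1 - q))))) = q ^ n := by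
      rw [hpe]
      simp only [sub_self, zero_mul, add_zero, one_mul, one_div, Real.log_inv]
      rw [show -((n : ℝ) * -Real.log q) = (n : ℝ) * Real.log q by ring,
        Real.exp_nat_mul, Real.exp_log hq]
    rw [hL, hR]
  · -- main case: k < n
    have hkn' : k < n := lt_of_le_of_ne hk hkn
    have hplt1 : p < 1 := by rw [hp, div_lt_one hn0]; exact_mod_cast hkn'
    have h1p : 0 < 1 - p := by linarith
    have h1q : 0 < 1 - q := by linarith
    set A : ℝ := q / p with hA
    set B : ℝ := (1 - q) / (1 - p) with hB
    have hA0 : 0 < A := by positivity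
    have hB0 : 0 < B := by positivity
    have hA1 : A ≤ 1 := by rw [hA, div_le_one hp0]; exact hqp
    have hB1 : 1 ≤ B := by rw [hB, le_div_iff₀ h1p]; linarith
    have hAB : A ≤ B := le_trans hA1 hB1
    -- rewrite the RHS as A^k * B^(n-k)
    have hR : Real.exp (-((n : ℝ) *
          (p * Real.log (p / q) + (1 - p) * Real.log ((1 - p) / (1 - q)))))
        = A ^ k * B ^ (n - k) := by
      have e1 : (n : ℝ) * p = k := by rw [hp]; field_simp
      have e2 : (n : ℝ) * (1 - p) = ((n - k : ℕ) : ℝ) := by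
        rw [Nat.cast_sub hk, hp]; field_simp
      have hlogA : Real.log A = -Real.log (p / q) := by
        rw [hA, Real.log_div hq.ne' hp0.ne', Real.log_div hp0.ne' hq.ne']; ring
      have hlogB : Real.log B = -Real.log ((1 - p) / (1 - q)) := by
        rw [hB, Real.log_div h1q.ne' h1p.ne', Real.log_div h1p.ne' h1q.ne']; ring
      have : -((n : ℝ) * (p * Real.log (p / q) + (1 - p) * Real.log ((1 - p) / (1 - q))))
          = (k : ℝ) * Real.log A + ((n - k : ℕ) : ℝ) * Real.log B := by
        rw [hlogA, hlogB, ← e1, ← e2]; ring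
      rw [this, Real.exp_add, Real.exp_nat_mul, Real.exp_nat_mul,
        Real.exp_log hA0, Real.exp_log hB0]
    rw [hR]
    -- termwise bound
    have key : ∀ j ∈ Finset.range (n + 1),
        (if k ≤ j then (n.choose j : ℝ) * q ^ j * (1 - q) ^ (n - j) else 0)
          ≤ (A ^ k * B ^ (n - k)) * ((n.choose j : ℝ) * p ^ j * (1 - p) ^ (n - j)) := by
      intro j hj
      have hj' : j ≤ n := Nat.lt_succ_iff.mp (Finset.mem_range.mp hj)
      by_cases h : k ≤ j
      · rw [if_pos h]
        have hqA : q = p * A := by rw [hA]; field_simp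
        have hqB : (1 - q) = (1 - p) * B := by rw [hB]; field_simp
        have hABpow : A ^ j * B ^ (n - j) ≤ A ^ k * B ^ (n - k) := by
          have e1 : A ^ j = A ^ k * A ^ (j - k) := by rw [← pow_add]; congr 1; omega
          have e2 : B ^ (n - k) = B ^ (j - k) * B ^ (n - j) := by rw [← pow_add]; congr 1; omega
          calc A ^ j * B ^ (n - j) = A ^ k * B ^ (n - j) * A ^ (j - k) := by rw [e1]; ring
            _ ≤ A ^ k * B ^ (n - j) * B ^ (j - k) := by
                apply mul_le_mul_of_nonneg_left (pow_le_pow_left₀ hA0.le hAB _) (by positivity)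
            _ = A ^ k * B ^ (n - k) := by rw [e2]; ring
        calc (n.choose j : ℝ) * q ^ j * (1 - q) ^ (n - j)
            = ((n.choose j : ℝ) * p ^ j * (1 - p) ^ (n - j)) * (A ^ j * B ^ (n - j)) := by
              rw [hqB, hqA, mul_pow, mul_pow]; ring
          _ ≤ ((n.choose j : ℝ) * p ^ j * (1 - p) ^ (n - j)) * (A ^ k * B ^ (n - k)) := by
              apply mul_le_mul_of_nonneg_left hABpow (by positivity)
          _ = (A ^ k * B ^ (n - k)) * ((n.choose j : ℝ) * p ^ j * (1 - p) ^ (n - j)) := by ring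
      · rw [if_neg h]; positivity
    have hsum1 : ∑ j ∈ Finset.range (n + 1), (n.choose j : ℝ) * p ^ j * (1 - p) ^ (n - j) = 1 := by
      have hb := add_pow p (1 - p) n
      have : (p + (1 - p)) ^ n = (1 : ℝ) := by norm_num
      rw [this] at hb
      rw [show (∑ j ∈ Finset.range (n + 1), (n.choose j : ℝ) * p ^ j * (1 - p) ^ (n - j))
          = ∑ m ∈ Finset.range (n + 1), p ^ m * (1 - p) ^ (n - m) * (n.choose m : ℝ) from
        Finset.sum_congr rfl fun j _ => by ring, ← hb]
    calc (∑ j ∈ Finset.range (n + 1),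
          if k ≤ j then (n.choose j : ℝ) * q ^ j * (1 - q) ^ (n - j) else 0)
        ≤ ∑ j ∈ Finset.range (n + 1),
            (A ^ k * B ^ (n - k)) * ((n.choose j : ℝ) * p ^ j * (1 - p) ^ (n - j)) :=
          Finset.sum_le_sum key
      _ = (A ^ k * B ^ (n - k)) *
            ∑ j ∈ Finset.range (n + 1), (n.choose j : ℝ) * p ^ j * (1 - p) ^ (n - j) := by
          rw [Finset.mul_sum]
      _ = A ^ k * B ^ (n - k) := by rw [hsum1, mul_one]
end

section
/- If a discrete random variable M on the integers satisfies P(M < m) < Φ(G(m)) < P(M ≤ m) for all integers m in its support (the intersection property), then the second-order statistic 2D comparison follows: P(G(M)² > s) differs from the χ²(1)-tail P(Z² > s) by at most the maximal step probability, i.e., |P(G(M) ≤ w) - Φ(w)| ≤ max_m P(M = m) for all w. -/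
/-!
Let `c` be the supremum of the point masses `P(M = m)`. If `j` is the last atom at or below
`m`, then `P(M ≤ m) = P(M < j) + P(M = j) < Φ(G j) + c ≤ Φ(G m) + c`; symmetrically, the first
atom at or above `m` gives `P(M ≥ m) < 1 - Φ(G m) + c`. For `D = {m | G m ≤ w}`, the event
`G(M) ≤ w` is `M ∈ D`, a directed union of the events `M ≤ m` with `m ∈ D`, and its complement is
a directed union of the events `M ≥ m` with `m ∉ D`; continuity from below turns the two
one-sided estimates into `|P(G(M) ≤ w) - Φ w| ≤ c`.
-/

open MeasureTheory ProbabilityTheory Set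

lemma cdf_gaussianReal_zero_one (w : ℝ) :
    cdf (gaussianReal 0 1) w = ∫ z in Iic w, Real.exp (-z ^ 2 / 2) / Real.sqrt (2 * Real.pi) := by
  rw [cdf_eq_real, measureReal_def, gaussianReal_apply_eq_integral _ one_ne_zero,
    ENNReal.toReal_ofReal
      (setIntegral_nonneg measurableSet_Iic fun _ _ ↦ gaussianPDFReal_nonneg _ _ _)]
  congr 1 with z
  simp [gaussianPDFReal, div_eq_inv_mul]

section FiniteMeasure

variable {α : Type*} [MeasurableSpace α] {μ : Measure α} [IsFiniteMeasure μ]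

theorem Directed.measureReal_iUnion_le {ι : Type*} [Countable ι] {s : ι → Set α}
    (hs : Directed (· ⊆ ·) s) {b : ℝ} (hb : 0 ≤ b) (h : ∀ i, μ.real (s i) ≤ b) :
    μ.real (⋃ i, s i) ≤ b := by
  refine ENNReal.toReal_le_of_le_ofReal hb ?_
  rw [hs.measure_iUnion]
  exact iSup_le fun i ↦ (ENNReal.le_ofReal_iff_toReal_le (measure_ne_top _ _) hb).2 (h i)

lemma measureReal_singleton_le_iSup (j : α) : μ.real {j} ≤ ⨆ i, μ.real {i} :=
  le_ciSup (f := fun i ↦ μ.real {i})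
    ⟨μ.real univ, by rintro _ ⟨i, rfl⟩; exact measureReal_mono (subset_univ _)⟩ j

lemma iSup_measureReal_singleton_nonneg [Nonempty α] : 0 ≤ ⨆ i, μ.real {i} :=
  measureReal_nonneg.trans (measureReal_singleton_le_iSup (Classical.arbitrary α))

lemma measure_eq_zero_of_measureReal_singleton [Countable α] {s : Set α}
    (h : ∀ i ∈ s, μ.real {i} = 0) : μ s = 0 :=
  (measure_null_iff_singleton s.to_countable).2 fun i hi ↦ (measureReal_eq_zero_iff).1 (h i hi)

variable [LinearOrder α]

lemma measureReal_Iic_eq_measureReal_Iio_add [MeasurableSingletonClass α] (j : α) :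
    μ.real (Iic j) = μ.real (Iio j) + μ.real {j} := by
  rw [← Iio_union_right, measureReal_union (by simp) (measurableSet_singleton j)]

variable [Countable α]

theorem IsLowerSet.measureReal_le {D : Set α} (hD : IsLowerSet D) {b : ℝ} (hb : 0 ≤ b)
    (h : ∀ m ∈ D, μ.real (Iic m) ≤ b) : μ.real D ≤ b := by
  have hD_eq : D = ⋃ m : D, Iic (m : α) := by
    ext x
    simp only [mem_iUnion, mem_Iic]
    exact ⟨fun hx ↦ ⟨⟨x, hx⟩, le_rfl⟩, fun ⟨m, hxm⟩ ↦ hD hxm m.2⟩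
  have hmono : Monotone fun m : D ↦ Iic (m : α) := fun _ _ h ↦ Iic_subset_Iic.2 h
  rw [hD_eq]
  exact hmono.directed_le.measureReal_iUnion_le hb fun m ↦ h m m.2

theorem IsUpperSet.measureReal_le {D : Set α} (hD : IsUpperSet D) {b : ℝ} (hb : 0 ≤ b)
    (h : ∀ m ∈ D, μ.real (Ici m) ≤ b) : μ.real D ≤ b := by
  have hD_eq : D = ⋃ m : D, Ici (m : α) := by
    ext x
    simp only [mem_iUnion, mem_Ici]
    exact ⟨fun hx ↦ ⟨⟨x, hx⟩, le_rfl⟩, fun ⟨m, hxm⟩ ↦ hD hxm m.2⟩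
  have hanti : Antitone fun m : D ↦ Ici (m : α) := fun _ _ h ↦ Ici_subset_Ici.2 h
  rw [hD_eq]
  exact hanti.directed_le.measureReal_iUnion_le hb fun m ↦ h m m.2

end FiniteMeasure

section Integers

variable {μ : Measure ℤ} [IsFiniteMeasure μ]

lemma exists_measureReal_Iic_eq_of_pos {m : ℤ} (h : 0 < μ.real (Iic m)) :
    ∃ j ≤ m, 0 < μ.real {j} ∧ μ.real (Iic m) = μ.real (Iic j) := by
  have hatom : ∃ j, j ≤ m ∧ 0 < μ.real {j} := by
    by_contra! hnone
    have : μ (Iic m) = 0 := measure_eq_zero_of_measureReal_singleton fun j hj ↦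
      le_antisymm (hnone j hj) measureReal_nonneg
    simp [measureReal_def, this] at h
  obtain ⟨j, ⟨hjm, hj⟩, hmax⟩ := Int.exists_greatest_of_bdd ⟨m, fun _ h ↦ h.1⟩ hatom
  have hgap : μ (Ioc j m) = 0 := measure_eq_zero_of_measureReal_singleton fun i hi ↦
    le_antisymm (not_lt.1 fun hpos ↦ hi.1.not_ge (hmax i ⟨hi.2, hpos⟩)) measureReal_nonneg
  refine ⟨j, hjm, hj, ?_⟩
  rw [← Iic_union_Ioc_eq_Iic hjm]
  exact measureReal_congr (union_ae_eq_left_of_ae_eq_empty (ae_eq_empty.2 hgap))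

lemma exists_measureReal_Ici_eq_of_pos {m : ℤ} (h : 0 < μ.real (Ici m)) :
    ∃ j ≥ m, 0 < μ.real {j} ∧ μ.real (Ici m) = μ.real (Ici j) := by
  have hatom : ∃ j, m ≤ j ∧ 0 < μ.real {j} := by
    by_contra! hnone
    have : μ (Ici m) = 0 := measure_eq_zero_of_measureReal_singleton fun j hj ↦
      le_antisymm (hnone j hj) measureReal_nonneg
    simp [measureReal_def, this] at h
  obtain ⟨j, ⟨hmj, hj⟩, hmin⟩ := Int.exists_least_of_bdd ⟨m, fun _ h ↦ h.1⟩ hatom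
  have hgap : μ (Ico m j) = 0 := measure_eq_zero_of_measureReal_singleton fun i hi ↦
    le_antisymm (not_lt.1 fun hpos ↦ hi.2.not_ge (hmin i ⟨hi.1, hpos⟩)) measureReal_nonneg
  refine ⟨j, hmj, hj, ?_⟩
  rw [← Ico_union_Ici_eq_Ici hmj]
  exact measureReal_congr (union_ae_eq_right_of_ae_eq_empty (ae_eq_empty.2 hgap))

end Integers

def IntersectionProperty (μ : Measure ℤ) (G : ℤ → ℝ) (Φ : ℝ → ℝ) : Prop :=
  ∀ m, 0 < μ.real {m} → μ.real (Iio m) < Φ (G m) ∧ Φ (G m) < μ.real (Iic m)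

namespace IntersectionProperty

variable {μ : Measure ℤ} {G : ℤ → ℝ} {Φ : ℝ → ℝ}

lemma measureReal_Iic_le [IsFiniteMeasure μ] (h : IntersectionProperty μ G Φ) (hG : Monotone G)
    (hΦ : Monotone Φ) (hΦ₀ : ∀ x, 0 ≤ Φ x) (m : ℤ) :
    μ.real (Iic m) ≤ Φ (G m) + ⨆ i, μ.real {i} := by
  have hc : 0 ≤ ⨆ i, μ.real {i} := iSup_measureReal_singleton_nonneg
  rcases measureReal_nonneg.eq_or_lt with hzero | hpos
  · rw [← hzero]; linarith [hΦ₀ (G m)]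
  obtain ⟨j, hjm, hj, hmj⟩ := exists_measureReal_Iic_eq_of_pos hpos
  calc μ.real (Iic m) = μ.real (Iio j) + μ.real {j} := by
        rw [hmj, measureReal_Iic_eq_measureReal_Iio_add]
    _ ≤ Φ (G m) + ⨆ i, μ.real {i} := add_le_add
        ((h j hj).1.le.trans (hΦ (hG hjm))) (measureReal_singleton_le_iSup j)

lemma measureReal_Ici_le [IsProbabilityMeasure μ] (h : IntersectionProperty μ G Φ)
    (hG : Monotone G) (hΦ : Monotone Φ) (hΦ₁ : ∀ x, Φ x ≤ 1) (m : ℤ) :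
    μ.real (Ici m) ≤ 1 - Φ (G m) + ⨆ i, μ.real {i} := by
  have hc : 0 ≤ ⨆ i, μ.real {i} := iSup_measureReal_singleton_nonneg
  rcases measureReal_nonneg.eq_or_lt with hzero | hpos
  · rw [← hzero]; linarith [hΦ₁ (G m)]
  obtain ⟨j, hmj, hj, hjm⟩ := exists_measureReal_Ici_eq_of_pos hpos
  calc μ.real (Ici m) = 1 - μ.real (Iic j) + μ.real {j} := by
        rw [hjm, ← compl_Iio, probReal_compl_eq_one_sub measurableSet_Iio,
          measureReal_Iic_eq_measureReal_Iio_add]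
        ring
    _ ≤ 1 - Φ (G m) + ⨆ i, μ.real {i} := by
        linarith [(h j hj).2, hΦ (hG hmj), measureReal_singleton_le_iSup (μ := μ) j]

theorem abs_measureReal_preimage_Iic_sub_le [IsProbabilityMeasure μ]
    (h : IntersectionProperty μ G Φ) (hG : Monotone G) (hΦ : Monotone Φ) (hΦ₀ : ∀ x, 0 ≤ Φ x)
    (hΦ₁ : ∀ x, Φ x ≤ 1) (w : ℝ) :
    |μ.real (G ⁻¹' Iic w) - Φ w| ≤ ⨆ i, μ.real {i} := by
  have hc : 0 ≤ ⨆ i, μ.real {i} := iSup_measureReal_singleton_nonneg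
  have hD : IsLowerSet (G ⁻¹' Iic w) := fun _ _ hab hb ↦ (hG hab).trans hb
  have hupper : μ.real (G ⁻¹' Iic w) ≤ Φ w + ⨆ i, μ.real {i} :=
    hD.measureReal_le (by linarith [hΦ₀ w]) fun m hm ↦
      (h.measureReal_Iic_le hG hΦ hΦ₀ m).trans (by linarith [hΦ hm])
  have hlower : μ.real (G ⁻¹' Iic w)ᶜ ≤ 1 - Φ w + ⨆ i, μ.real {i} :=
    hD.compl.measureReal_le (by linarith [hΦ₁ w]) fun m (hm : ¬G m ≤ w) ↦
      (h.measureReal_Ici_le hG hΦ hΦ₁ m).trans (by linarith [hΦ (not_le.1 hm).le])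
  rw [probReal_compl_eq_one_sub (.of_discrete)] at hlower
  rw [abs_le]
  constructor <;> linarith

end IntersectionProperty

/-- If an integer-valued random variable `M` satisfies the intersection property
`P(M < m) < Φ(G(m)) < P(M ≤ m)` for all `m` in its support, then the CDF of `G(M)` differs
from the standard Gaussian CDF `Φ` by at most the maximal step probability:
`|P(G(M) ≤ w) - Φ(w)| ≤ sup_m P(M = m)` for all `w`. -/
theorem intersection_implies_cdf_close {Ω : Type*} [MeasurableSpace Ω]
    (P : Measure Ω) [IsProbabilityMeasure P] (M : Ω → ℤ) (hM : Measurable M)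
    (G : ℤ → ℝ) (hG : StrictMono G)
    (Φ : ℝ → ℝ)
    (hΦ : Φ = fun w => ∫ z in Set.Iic w, Real.exp (-z ^ 2 / 2) / Real.sqrt (2 * Real.pi))
    (hint : ∀ m : ℤ, 0 < (P {ω | M ω = m}).toReal →
      (P {ω | M ω < m}).toReal < Φ (G m) ∧ Φ (G m) < (P {ω | M ω ≤ m}).toReal) :
    ∀ w : ℝ, |(P {ω | G (M ω) ≤ w}).toReal - Φ w|
      ≤ ⨆ m : ℤ, (P {ω | M ω = m}).toReal := by
  obtain rfl : Φ = cdf (gaussianReal 0 1) :=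
    hΦ.trans (funext fun w ↦ (cdf_gaussianReal_zero_one w).symm)
  have hpush (s : Set ℤ) : (P.map M).real s = (P (M ⁻¹' s)).toReal :=
    map_measureReal_apply hM (.of_discrete)
  have : IsProbabilityMeasure (P.map M) := Measure.isProbabilityMeasure_map hM.aemeasurable
  have hμ : IntersectionProperty (P.map M) G (cdf (gaussianReal 0 1)) := by
    intro m
    simp only [hpush]
    exact hint m
  intro w
  have hw := hμ.abs_measureReal_preimage_Iic_sub_le hG.monotone (cdf _).mono (cdf_nonneg _)
    (cdf_le_one _) w
  simp only [hpush] at hw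
  exact hw
end
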